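/- arXiv:1107.4245 — 3 statements merged into one kernel-verified Lean document; each statement's English description precedes it below -/
import Mathlib

section
/- For the entire function f(z) = cos(√z) (defined via the even power series ∑ (-1)^n z^n/(2n)!), for every w ∈ ℂ we have f'(z) → 0 as z → ∞ along the set f⁻¹(w), i.e., for every ε > 0 there exists R such that all z with f(z) = w and |z| > R satisfy |f'(z)| < ε. -/
open scoped Nat

/-- For the entire function `f(z) = cos √z = ∑ (-1)^n zⁿ/(2n)!`, for every `w ∈ ℂ`
we have `f'(z) → 0` as `z → ∞` along the preimage `f⁻¹(w)`. -/
theorem deriv_cos_sqrt_tendsto_zero_on_fibers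
    (f : ℂ → ℂ)
    (hf : ∀ z : ℂ, f z = ∑' n : ℕ, (-1) ^ n * z ^ n / ((2 * n)! : ℂ)) :
    ∀ w : ℂ, ∀ ε > (0 : ℝ), ∃ R : ℝ, ∀ z : ℂ, f z = w → R < ‖z‖ → ‖deriv f z‖ < ε := by
  -- Step 1: f (s^2) = cos s for every s.
  have hA : ∀ s : ℂ, f (s ^ 2) = Complex.cos s := by
    intro s
    rw [hf, Complex.cos_eq_tsum]
    congr 1
    funext n
    rw [← pow_mul]
  -- Step 2: f is differentiable away from 0.
  have hdiff : ∀ z₀ : ℂ, z₀ ≠ 0 → DifferentiableAt ℂ f z₀ := by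
    intro z₀ hz₀
    obtain ⟨g, hg, hgd⟩ : ∃ g : ℂ → ℂ,
        (∀ᶠ z in nhds z₀, g z ^ 2 = z) ∧ DifferentiableAt ℂ g z₀ := by
      have hne : ∀ᶠ z in nhds z₀, z ≠ 0 :=
        eventually_ne_nhds hz₀
      by_cases h : z₀ ∈ Complex.slitPlane
      · refine ⟨fun z => z ^ (1/2 : ℂ), ?_, ?_⟩
        · filter_upwards [hne] with z hz
          rw [sq, ← Complex.cpow_add _ _ hz]
          norm_num
        · exact (Complex.hasStrictDerivAt_cpow_const h).hasDerivAt.differentiableAt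
      · have h' : -z₀ ∈ Complex.slitPlane := by
          simp only [Complex.mem_slitPlane_iff, not_or, not_lt, ne_eq, not_not] at h ⊢
          rcases h with ⟨hre, him⟩
          left
          simp only [Complex.neg_re]
          rcases lt_or_eq_of_le hre with h1 | h1
          · linarith
          · exact absurd (Complex.ext h1 him) hz₀
        refine ⟨fun z => Complex.I * (-z) ^ (1/2 : ℂ), ?_, ?_⟩
        · filter_upwards [hne] with z hz
          have hnz : -z ≠ 0 := neg_ne_zero.mpr hz
          rw [mul_pow, Complex.I_sq, sq, ← Complex.cpow_add _ _ hnz]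
          norm_num
        · have : HasDerivAt (fun z : ℂ => (-z) ^ (1/2 : ℂ))
              ((1/2 : ℂ) * (-z₀) ^ ((1/2 : ℂ) - 1) * (-1)) z₀ := by
            exact HasDerivAt.cpow_const ((hasDerivAt_id z₀).neg) h'
          exact (this.differentiableAt).const_mul _
    have heq : f =ᶠ[nhds z₀] fun z => Complex.cos (g z) := by
      filter_upwards [hg] with z hz
      have := hA (g z)
      rw [hz] at this
      exact this
    rw [Filter.EventuallyEq.differentiableAt_iff heq]
    exact (Complex.differentiable_cos (g z₀)).comp z₀ hgd
  -- Step 3: chain rule identity: deriv f (s^2) * (2*s) = - sin s for s ≠ 0.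
  have hchain : ∀ s : ℂ, s ≠ 0 → deriv f (s ^ 2) * (2 * s) = - Complex.sin s := by
    intro s hs
    have hsq : HasDerivAt (fun x : ℂ => x ^ 2) (2 * s) s := by
      simpa using hasDerivAt_pow 2 s
    have h1 : HasDerivAt (fun x => f (x ^ 2)) (deriv f (s ^ 2) * (2 * s)) s :=
      ((hdiff (s ^ 2) (pow_ne_zero 2 hs)).hasDerivAt).comp s hsq
    have h2 : (fun x : ℂ => f (x ^ 2)) = Complex.cos := funext hA
    rw [h2] at h1
    exact h1.unique (Complex.hasDerivAt_cos s)
  -- Step 4: conclusion.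
  intro w ε hε
  set C : ℝ := Real.sqrt ‖1 - w ^ 2‖ with hC
  refine ⟨(C / (2 * ε)) ^ 2 + 1, ?_⟩
  intro z hfz hz
  have hzpos : 0 < ‖z‖ := lt_of_le_of_lt (by positivity) hz
  have hz0 : z ≠ 0 := by simpa using hzpos.ne'
  -- square root of z
  set s : ℂ := z ^ (1/2 : ℂ) with hs
  have hs2 : s ^ 2 = z := by
    rw [hs, sq, ← Complex.cpow_add _ _ hz0]
    norm_num
  have hsne : s ≠ 0 := by
    intro h
    rw [h] at hs2
    simp at hs2
    exact hz0 hs2.symm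
  have hkey : deriv f z * (2 * s) = - Complex.sin s := by
    rw [← hs2]; exact hchain s hsne
  have hcs : Complex.cos s = w := by rw [← hA s, hs2, hfz]
  have hsin2 : Complex.sin s ^ 2 = 1 - w ^ 2 := by
    have := Complex.sin_sq_add_cos_sq s
    rw [hcs] at this
    linear_combination this
  -- norms
  have hnorm_s : ‖s‖ = Real.sqrt ‖z‖ := by
    rw [← hs2, norm_pow, Real.sqrt_sq (norm_nonneg s)]
  have hnorm_sin : ‖Complex.sin s‖ = C := by
    rw [hC, ← hsin2, norm_pow, Real.sqrt_sq (norm_nonneg _)]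
  have hmuls : ‖deriv f z‖ * (2 * ‖s‖) = C := by
    have := congrArg norm hkey
    rw [norm_mul, norm_neg, hnorm_sin] at this
    simpa [norm_mul] using this
  have hspos : 0 < ‖s‖ := norm_pos_iff.mpr hsne
  have hCnn : 0 ≤ C := Real.sqrt_nonneg _
  -- sqrt ‖z‖ > C / (2ε)
  have hsqrt : C / (2 * ε) < Real.sqrt ‖z‖ := by
    have h1 : Real.sqrt ((C / (2 * ε)) ^ 2 + 1) ≤ Real.sqrt ‖z‖ :=
      Real.sqrt_le_sqrt (le_of_lt hz)
    have h2 : C / (2 * ε) < Real.sqrt ((C / (2 * ε)) ^ 2 + 1) :=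
      Real.lt_sqrt_of_sq_lt (by linarith)
    linarith
  have h2e : (0 : ℝ) < 2 * ε := by linarith
  have hClt : C < 2 * ε * Real.sqrt ‖z‖ := by
    have := (div_lt_iff₀ h2e).mp hsqrt
    linarith [this]
  rw [hnorm_s] at hmuls
  have hsqz : 0 < Real.sqrt ‖z‖ := Real.sqrt_pos.mpr hzpos
  nlinarith [hmuls, hClt, hsqz, norm_nonneg (deriv f z)]
end

section
/- Let u be a positive harmonic function on the open disc B(a, d) and suppose u(z₁) = 0 for some z₁ ∈ ∂B(a,d), where u extends continuously to z₁ and is differentiable at z₁ with |∇u(z₁)| ≤ L. Then u(a) ≤ 2dL. -/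
/-!
Write `u = Re F` with `F` holomorphic on the disc. The map `(F - F a) / (F + conj (F a))` sends
the disc into the closed unit disc and `a` to `0`, so the Schwarz lemma gives Harnack's lower bound
`u a * (d - |z - a|) ≤ u z * (d + |z - a|)`. On the segment from `z₁` to `a` this reads
`u (z₁ + t (a - z₁)) ≥ t u(a) / 2`; since `u z₁ = 0`, the derivative of `u` at `z₁` in the
direction `a - z₁`, a vector of length `d`, is at least `u a / 2`.
-/

/-- `u` is harmonic on the open set `V ⊆ ℂ`: it is `C²` and its Laplacian
(the sum of the second derivatives in the directions `1` and `i`) vanishes. -/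
def IsHarmonicOn (u : ℂ → ℝ) (V : Set ℂ) : Prop :=
  ∀ z ∈ V, ContDiffAt ℝ 2 u z ∧
    iteratedFDeriv ℝ 2 u z ![1, 1] + iteratedFDeriv ℝ 2 u z ![Complex.I, Complex.I] = 0

open Metric Set Filter InnerProductSpace ComplexConjugate

theorem IsHarmonicOn.harmonicOnNhd {u : ℂ → ℝ} {V : Set ℂ} (hV : IsOpen V)
    (hu : IsHarmonicOn u V) : HarmonicOnNhd u V := by
  intro z hz
  refine ⟨(hu z hz).1, ?_⟩
  filter_upwards [hV.mem_nhds hz] with w hw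
  rw [laplacian_eq_iteratedFDeriv_complexPlane]
  exact (hu w hw).2

theorem HasDerivAt.le_of_forall_le_slope_right {f : ℝ → ℝ} {f' x m b : ℝ}
    (hf : HasDerivAt f f' x) (hb : x < b) (h : ∀ y ∈ Ioo x b, m ≤ slope f x y) : m ≤ f' :=
  ge_of_tendsto (hasDerivAt_iff_tendsto_slope_left_right.1 hf).2
    (eventually_of_mem (Ioo_mem_nhdsGT hb) h)

namespace Complex

theorem norm_sub_le_norm_add_conj {w ζ : ℂ} (hw : 0 ≤ w.re) (hζ : 0 ≤ ζ.re) :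
    ‖w - ζ‖ ≤ ‖w + conj ζ‖ := by
  rw [← sq_le_sq₀ (norm_nonneg _) (norm_nonneg _), Complex.sq_norm, Complex.sq_norm,
    normSq_apply, normSq_apply]
  simp only [sub_re, sub_im, add_re, add_im, conj_re, conj_im]
  nlinarith [mul_nonneg hw hζ]

theorem re_mul_sub_le_re_mul_add_of_mul_norm_sub_le {w ζ : ℂ} {s d : ℝ} (hs : 0 ≤ s)
    (hsd : s ≤ d) (hwζ : 0 ≤ w.re + ζ.re) (h : d * ‖w - ζ‖ ≤ s * ‖w + conj ζ‖) :
    ζ.re * (d - s) ≤ w.re * (d + s) := by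
  have hsq := pow_le_pow_left₀ (mul_nonneg (hs.trans hsd) (norm_nonneg _)) h 2
  rw [mul_pow, mul_pow, Complex.sq_norm, Complex.sq_norm, normSq_apply, normSq_apply] at hsq
  simp only [sub_re, sub_im, add_re, add_im, conj_re, conj_im] at hsq
  have hre : (d * (ζ.re - w.re)) ^ 2 ≤ (s * (w.re + ζ.re)) ^ 2 := by
    nlinarith [mul_nonneg (mul_nonneg (sub_nonneg.2 hsd) (add_nonneg hs (hs.trans hsd)))
      (sq_nonneg (w.im - ζ.im))]
  nlinarith [le_of_sq_le_sq hre (mul_nonneg hs hwζ)]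

theorem harnack_lower_bound_re {f : ℂ → ℂ} {a z : ℂ} {d : ℝ}
    (hf : DifferentiableOn ℂ f (ball a d)) (hpos : ∀ w ∈ ball a d, 0 < (f w).re)
    (hz : z ∈ ball a d) :
    (f a).re * (d - dist z a) ≤ (f z).re * (d + dist z a) := by
  have hc : 0 < (f a).re := hpos a (mem_ball_self (pos_of_mem_ball hz))
  have hne : ∀ w ∈ ball a d, f w + conj (f a) ≠ 0 := fun w hw h ↦ by
    have := congrArg re h
    simp only [add_re, conj_re, zero_re] at this
    linarith [hpos w hw]
  -- A Möbius map from the right half-plane onto the unit disc, sending `f a` to `0`.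
  set g : ℂ → ℂ := fun w ↦ (f w - f a) / (f w + conj (f a))
  have hg : DifferentiableOn ℂ g (ball a d) :=
    (hf.sub_const _).div (hf.add_const _) hne
  have hga : g a = 0 := by simp [g]
  have hmaps : MapsTo g (ball a d) (closedBall (g a) 1) := fun w hw ↦ by
    rw [hga, mem_closedBall_zero_iff, norm_div]
    exact div_le_one_of_le₀ (norm_sub_le_norm_add_conj (hpos w hw).le hc.le) (norm_nonneg _)
  have hschwarz := dist_le_div_mul_dist_of_mapsTo_ball hg hmaps hz
  rw [hga, dist_zero_right, norm_div, div_le_iff₀ (norm_pos_iff.2 (hne z hz))] at hschwarz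
  refine re_mul_sub_le_re_mul_add_of_mul_norm_sub_le dist_nonneg (mem_ball.1 hz).le
    (add_pos (hpos z hz) hc).le ?_
  have hd : 0 < d := pos_of_mem_ball hz
  calc d * ‖f z - f a‖ ≤ d * (1 / d * dist z a * ‖f z + conj (f a)‖) := by gcongr
    _ = dist z a * ‖f z + conj (f a)‖ := by field_simp

end Complex

theorem InnerProductSpace.HarmonicOnNhd.harnack_lower_bound {u : ℂ → ℝ} {a z : ℂ} {d : ℝ}
    (hu : HarmonicOnNhd u (ball a d)) (hpos : ∀ w ∈ ball a d, 0 < u w) (hz : z ∈ ball a d) :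
    u a * (d - dist z a) ≤ u z * (d + dist z a) := by
  obtain ⟨F, hF, hFu⟩ := hu.exists_analyticOnNhd_ball_re_eq
  have ha : a ∈ ball a d := mem_ball_self (pos_of_mem_ball hz)
  rw [← hFu ha, ← hFu hz]
  exact Complex.harnack_lower_bound_re hF.differentiableOn
    (fun w hw ↦ (hFu hw).trans_gt (hpos w hw)) hz

theorem InnerProductSpace.HarmonicOnNhd.le_two_mul_fderiv_inward {u : ℂ → ℝ} {a z₁ : ℂ}
    {d : ℝ} {u' : ℂ →L[ℝ] ℝ} (hd : 0 < d) (hu : HarmonicOnNhd u (ball a d))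
    (hpos : ∀ w ∈ ball a d, 0 < u w) (hz₁ : z₁ ∈ sphere a d) (hz₁0 : u z₁ = 0)
    (hu' : HasFDerivAt u u' z₁) :
    u a ≤ 2 * u' (a - z₁) := by
  set ψ : ℝ → ℝ := fun t ↦ u (AffineMap.lineMap z₁ a t)
  have hψ : HasDerivAt ψ (u' (a - z₁)) 0 := by
    rw [← AffineMap.lineMap_apply_zero (k := ℝ) z₁ a] at hu'
    exact hu'.comp_hasDerivAt (0 : ℝ) AffineMap.hasDerivAt_lineMap
  suffices ∀ t ∈ Ioo (0 : ℝ) 1, u a / 2 ≤ slope ψ 0 t by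
    linarith [hψ.le_of_forall_le_slope_right one_pos this]
  intro t ht
  have hdist : dist (AffineMap.lineMap z₁ a t) a = (1 - t) * d := by
    rw [dist_lineMap_right, Real.norm_of_nonneg (by linarith [ht.2]), mem_sphere.1 hz₁]
  have hmem : AffineMap.lineMap z₁ a t ∈ ball a d := by
    rw [mem_ball, hdist]; nlinarith [ht.1]
  have hharnack := hu.harnack_lower_bound hpos hmem
  rw [hdist] at hharnack
  have hψt : u a * t ≤ ψ t * (2 - t) :=
    le_of_mul_le_mul_left (by linarith) hd
  rw [slope_def_field, show ψ 0 = 0 by simpa [ψ] using hz₁0, sub_zero, sub_zero,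
    le_div_iff₀ ht.1]
  nlinarith [mul_pos (hpos _ hmem) ht.1]

theorem center_value_le_of_boundary_zero_general
    (u : ℂ → ℝ) (a : ℂ) (d L : ℝ) (hd : 0 < d)
    (hu : IsHarmonicOn u (Metric.ball a d))
    (hpos : ∀ z ∈ Metric.ball a d, 0 < u z)
    (z₁ : ℂ) (hz₁ : z₁ ∈ Metric.sphere a d)
    (hz₁0 : u z₁ = 0)
    (hdiff : DifferentiableAt ℝ u z₁) (hL : ‖fderiv ℝ u z₁‖ ≤ L) :
    u a ≤ 2 * d * L := by
  have hinward := (hu.harmonicOnNhd isOpen_ball).le_two_mul_fderiv_inward hd hpos hz₁ hz₁0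
    hdiff.hasFDerivAt
  have hnorm : ‖a - z₁‖ = d := by rw [← dist_eq_norm, dist_comm, mem_sphere.1 hz₁]
  calc u a ≤ 2 * fderiv ℝ u z₁ (a - z₁) := hinward
    _ ≤ 2 * (‖fderiv ℝ u z₁‖ * ‖a - z₁‖) := by
      gcongr; exact (le_abs_self _).trans ((fderiv ℝ u z₁).le_opNorm _)
    _ ≤ 2 * d * L := by rw [hnorm]; nlinarith

/-- Harnack-inequality step: if `u` is positive harmonic on `B(a,d)`, extends
continuously to a boundary point `z₁` with `u(z₁) = 0`, and is differentiable at `z₁`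
with `|∇u(z₁)| ≤ L`, then `u(a) ≤ 2 d L`. -/
theorem center_value_le_of_boundary_zero
    (u : ℂ → ℝ) (a : ℂ) (d L : ℝ) (hd : 0 < d)
    (hu : IsHarmonicOn u (Metric.ball a d))
    (hpos : ∀ z ∈ Metric.ball a d, 0 < u z)
    (z₁ : ℂ) (hz₁ : z₁ ∈ Metric.sphere a d)
    (hcont : ContinuousWithinAt u (Metric.closedBall a d) z₁)
    (hz₁0 : u z₁ = 0)
    (hdiff : DifferentiableAt ℝ u z₁) (hL : ‖fderiv ℝ u z₁‖ ≤ L) :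
    u a ≤ 2 * d * L :=
  center_value_le_of_boundary_zero_general u a d L hd hu hpos z₁ hz₁ hz₁0 hdiff hL
end

section
/- Let (g_n) be a sequence of holomorphic functions on ℂ converging locally uniformly to g(z) = cos z, with g_n'' converging locally uniformly to -cos z, and suppose a_n → 0, b_n → 0 with g_n'(b_n) = 0. Then g_n'(a_n) = ∫_{b_n}^{a_n} g_n''(z) dz ~ (b_n - a_n) as n → ∞; in particular, if |g_n'(a_n)| ≤ δ_n then |b_n - a_n| ≤ 3δ_n/2 for all large n. -/
open Filter intervalIntegral

private lemma deriv_eq_integral_aux (g : ℂ → ℂ) (hg : Differentiable ℂ g) (a b : ℂ)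
    (hcrit : deriv g b = 0) :
    deriv g a = (∫ t in (0:ℝ)..1, deriv (deriv g) (b + t * (a - b))) * (a - b) := by
  have hA : AnalyticOnNhd ℂ (deriv g) Set.univ :=
    AnalyticOnNhd.deriv (fun z _ => hg.analyticAt z)
  have hd : ∀ z, DifferentiableAt ℂ (deriv g) z := fun z => (hA z trivial).differentiableAt
  have hc : Continuous (deriv (deriv g)) := by
    have h := hA.deriv
    have : Differentiable ℂ (deriv (deriv g)) := fun z => (h z trivial).differentiableAt
    exact this.continuous
  have key : ∀ t : ℝ, HasDerivAt (fun s : ℝ => deriv g (b + s * (a - b)))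
      (deriv (deriv g) (b + t * (a - b)) * (a - b)) t := by
    intro t
    have h1 : HasDerivAt (fun w : ℂ => b + w * (a - b)) (a - b) (t : ℂ) := by
      simpa using ((hasDerivAt_id (t:ℂ)).mul_const (a - b)).const_add b
    have h2 : HasDerivAt (deriv g) (deriv (deriv g) (b + (t:ℂ) * (a - b))) (b + (t:ℂ) * (a - b)) :=
      (hd _).hasDerivAt
    exact (h2.comp (t:ℂ) h1).comp_ofReal
  have hcont : Continuous (fun t : ℝ => deriv (deriv g) (b + t * (a - b)) * (a - b)) := by
    fun_prop
  have := integral_eq_sub_of_hasDerivAt (fun t _ => key t) (hcont.intervalIntegrable 0 1)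
  simp only [Complex.ofReal_one, Complex.ofReal_zero, one_mul, zero_mul, add_zero, hcrit] at this
  rw [intervalIntegral.integral_mul_const, sub_zero, show b + (a - b) = a by ring] at this
  exact this.symm

private lemma cont_second_deriv (g : ℂ → ℂ) (hg : Differentiable ℂ g) :
    Continuous (deriv (deriv g)) := by
  have hA : AnalyticOnNhd ℂ (deriv g) Set.univ :=
    AnalyticOnNhd.deriv (fun z _ => hg.analyticAt z)
  have h := hA.deriv
  have : Differentiable ℂ (deriv (deriv g)) := fun z => (h z trivial).differentiableAt
  exact this.continuous

/-- Estimates (3i)-(3j): if `gₙ → cos` and `gₙ'' → -cos` locally uniformly,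
`aₙ → 0`, `bₙ → 0` and `gₙ'(bₙ) = 0`, then `gₙ'(aₙ) ~ bₙ - aₙ`; in particular
`|gₙ'(aₙ)| ≤ δₙ` implies `|bₙ - aₙ| ≤ 3δₙ/2` for all large `n`. -/
theorem deriv_asymptotic_near_critical_point
    (g : ℕ → ℂ → ℂ) (hg : ∀ n, Differentiable ℂ (g n))
    (hconv : TendstoLocallyUniformly g Complex.cos atTop)
    (hconv'' : TendstoLocallyUniformly (fun n z => deriv (deriv (g n)) z)
      (fun z => -Complex.cos z) atTop)
    (a b : ℕ → ℂ)
    (ha : Tendsto a atTop (nhds 0)) (hb : Tendsto b atTop (nhds 0))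
    (hcrit : ∀ n, deriv (g n) (b n) = 0)
    (hne : ∀ n, a n ≠ b n) :
    Tendsto (fun n => deriv (g n) (a n) / (b n - a n)) atTop (nhds 1) ∧
    ∀ δ : ℕ → ℝ, (∀ n, ‖deriv (g n) (a n)‖ ≤ δ n) →
      ∀ᶠ n in atTop, ‖b n - a n‖ ≤ 3 * δ n / 2 := by
  set F : ℕ → ℂ := fun n => ∫ t in (0:ℝ)..1, deriv (deriv (g n)) (b n + t * (a n - b n)) with hF
  have hrepr : ∀ n, deriv (g n) (a n) = F n * (a n - b n) := fun n =>
    deriv_eq_integral_aux (g n) (hg n) (a n) (b n) (hcrit n)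
  -- the quotient equals -F n
  have hquot : ∀ n, deriv (g n) (a n) / (b n - a n) = -F n := by
    intro n
    have hne' : b n - a n ≠ 0 := sub_ne_zero.mpr (fun h => hne n h.symm)
    rw [hrepr n, show a n - b n = -(b n - a n) by ring, mul_neg, neg_div, mul_div_assoc,
      div_self hne', mul_one]
  -- F n → -1
  have hFlim : Tendsto F atTop (nhds (-1 : ℂ)) := by
    rw [Metric.tendsto_atTop]
    intro ε hε
    -- uniform convergence on closed ball 0 1
    have hUK : TendstoUniformlyOn (fun n z => deriv (deriv (g n)) z)
        (fun z => -Complex.cos z) atTop (Metric.closedBall (0:ℂ) 1) :=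
      (tendstoLocallyUniformly_iff_forall_isCompact.mp hconv'') _
        (isCompact_closedBall 0 1)
    have h1 : ∀ᶠ n in atTop, ∀ z ∈ Metric.closedBall (0:ℂ) 1,
        dist (-Complex.cos z) (deriv (deriv (g n)) z) < ε / 4 :=
      Metric.tendstoUniformlyOn_iff.mp hUK (ε/4) (by linarith)
    -- continuity of cos at 0
    have hcos : ContinuousAt Complex.cos 0 := Complex.continuous_cos.continuousAt
    obtain ⟨r, hr0, hr⟩ := Metric.continuousAt_iff.mp hcos (ε/4) (by linarith)
    set r' : ℝ := min r 1 with hr'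
    have hr'0 : 0 < r' := lt_min hr0 one_pos
    have h2 : ∀ᶠ n in atTop, ‖a n‖ < r' := by
      have := Metric.tendsto_nhds.mp ha r' hr'0
      simpa [dist_eq_norm] using this
    have h3 : ∀ᶠ n in atTop, ‖b n‖ < r' := by
      have := Metric.tendsto_nhds.mp hb r' hr'0
      simpa [dist_eq_norm] using this
    have key : ∀ᶠ n in atTop, dist (F n) (-1) < ε := by
      filter_upwards [h1, h2, h3] with n hn1 hn2 hn3
      -- every point on the segment is small
      have hpt : ∀ t : ℝ, t ∈ Set.uIoc (0:ℝ) 1 → ‖b n + (t:ℂ) * (a n - b n)‖ < r' := by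
        intro t ht
        rw [Set.uIoc_of_le (zero_le_one)] at ht
        have ht0 : 0 ≤ t := le_of_lt ht.1
        have ht1 : t ≤ 1 := ht.2
        have : b n + (t:ℂ) * (a n - b n) = (1 - (t:ℂ)) * b n + (t:ℂ) * a n := by ring
        rw [this]
        calc ‖(1 - (t:ℂ)) * b n + (t:ℂ) * a n‖
            ≤ ‖(1 - (t:ℂ)) * b n‖ + ‖(t:ℂ) * a n‖ := norm_add_le _ _
          _ = (1 - t) * ‖b n‖ + t * ‖a n‖ := by
              rw [norm_mul, norm_mul]
              congr 2
              · rw [show (1 - (t:ℂ)) = ((1 - t : ℝ) : ℂ) by push_cast; ring,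
                  Complex.norm_real, Real.norm_of_nonneg (by linarith)]
              · rw [Complex.norm_real, Real.norm_of_nonneg ht0]
          _ < (1 - t) * r' + t * r' := by
              rcases eq_or_lt_of_le ht1 with h | h
              · subst h; simpa using hn2
              · have := mul_lt_mul_of_pos_left hn3 (by linarith : (0:ℝ) < 1 - t)
                have h2' := mul_le_mul_of_nonneg_left (le_of_lt hn2) ht0
                nlinarith
          _ = r' := by ring
      -- bound the integrand deviation
      have hbound : ∀ t : ℝ, t ∈ Set.uIoc (0:ℝ) 1 →
          ‖deriv (deriv (g n)) (b n + (t:ℂ) * (a n - b n)) + 1‖ ≤ ε / 2 := by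
        intro t ht
        set z := b n + (t:ℂ) * (a n - b n) with hz
        have hz1 : ‖z‖ < r' := hpt t ht
        have hzball : z ∈ Metric.closedBall (0:ℂ) 1 := by
          rw [Metric.mem_closedBall, dist_zero_right]
          exact le_of_lt (lt_of_lt_of_le hz1 (min_le_right _ _))
        have hA := hn1 z hzball
        have hB : dist (Complex.cos z) (Complex.cos 0) < ε / 4 := by
          apply hr
          rw [dist_zero_right]
          exact lt_of_lt_of_le hz1 (min_le_left _ _)
        rw [Complex.cos_zero] at hB
        calc ‖deriv (deriv (g n)) z + 1‖
            = ‖(deriv (deriv (g n)) z - (-Complex.cos z)) + (1 - Complex.cos z)‖ := by ring_nf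
          _ ≤ ‖deriv (deriv (g n)) z - (-Complex.cos z)‖ + ‖1 - Complex.cos z‖ :=
              norm_add_le _ _
          _ ≤ ε/4 + ε/4 := by
              apply add_le_add
              · rw [← dist_eq_norm, dist_comm]; exact le_of_lt hA
              · rw [← dist_eq_norm, dist_comm]
                exact le_of_lt hB
          _ = ε/2 := by ring
      -- F n - (-1) = ∫ (integrand + 1)
      have hcc : Continuous (fun t : ℝ => deriv (deriv (g n)) (b n + (t:ℂ) * (a n - b n))) := by
        have := cont_second_deriv (g n) (hg n)
        fun_prop
      have hint : F n - (-1) = ∫ t in (0:ℝ)..1,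
          (deriv (deriv (g n)) (b n + (t:ℂ) * (a n - b n)) + 1) := by
        rw [intervalIntegral.integral_add (hcc.intervalIntegrable 0 1)
          (intervalIntegrable_const), intervalIntegral.integral_const]
        simp [hF]
      have := intervalIntegral.norm_integral_le_of_norm_le_const (C := ε/2) (fun t ht => hbound t ht)
      rw [dist_eq_norm, hint]
      calc ‖∫ t in (0:ℝ)..1, (deriv (deriv (g n)) (b n + (t:ℂ) * (a n - b n)) + 1)‖
          ≤ ε/2 * |(1:ℝ) - 0| := this
        _ < ε := by rw [sub_zero, abs_one, mul_one]; linarith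
    rcases key.exists_forall_of_atTop with ⟨N, hN⟩
    · exact ⟨N, hN⟩
  have hmain : Tendsto (fun n => deriv (g n) (a n) / (b n - a n)) atTop (nhds 1) := by
    have : Tendsto (fun n => -F n) atTop (nhds 1) := by
      simpa using hFlim.neg
    refine this.congr fun n => (hquot n).symm
  refine ⟨hmain, ?_⟩
  intro δ hδ
  have hnorm : Tendsto (fun n => ‖deriv (g n) (a n) / (b n - a n)‖) atTop (nhds 1) := by
    have := hmain.norm
    simpa using this
  have hev : ∀ᶠ n in atTop, (2/3 : ℝ) ≤ ‖deriv (g n) (a n) / (b n - a n)‖ :=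
    hnorm.eventually (eventually_ge_nhds (by norm_num))
  filter_upwards [hev] with n hn
  have hne' : b n - a n ≠ 0 := sub_ne_zero.mpr (fun h => hne n h.symm)
  have hpos : 0 < ‖b n - a n‖ := norm_pos_iff.mpr hne'
  rw [norm_div, le_div_iff₀ hpos] at hn
  have := hδ n
  nlinarith
end
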